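/- Define Q(A) := min over a ∈ ℝ², b ∈ ℝ of ℂ [[A,a],[aᵀ,b]] : [[A,a],[aᵀ,b]] for symmetric 2×2 matrices A, where ℂ is a symmetric positive definite fourth-order tensor. Then Q is a positive definite quadratic form on symmetric 2×2 matrices; in particular Q(A) > 0 for A ≠ 0. -/

import Mathlib

/-!
The energy `E ↦ ℂ E : E` is a quadratic form, positive definite on symmetric matrices, and
`[[A,a],[aᵀ,b]] = [[A,0],[0,0]] + [[0,a],[aᵀ,b]]`, where the second summand ranges over a
subspace of symmetric matrices. Minimising a quadratic form over a translate of a subspace on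
which it is positive definite is solvable in finite dimension: the polar form restricted to the
subspace is nondegenerate, so the linear term can be matched exactly, and at that point the
cross term vanishes, leaving `Q(v + L u + L w) = Q(v + L u) + Q(L w) ≥ Q(v + L u)`.
Positivity of the minimum is then positivity of `ℂ` on the nonzero symmetric matrix attaining it.
-/

/-- The elastic energy density `ℂ E : E` of a fourth-order tensor `ℂ` applied to a 3×3 matrix. -/
def en (C : Fin 3 → Fin 3 → Fin 3 → Fin 3 → ℝ) (E : Matrix (Fin 3) (Fin 3) ℝ) : ℝ :=
  ∑ i : Fin 3, ∑ j : Fin 3, ∑ k : Fin 3, ∑ l : Fin 3, C i j k l * E i j * E k l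

/-- The symmetric 3×3 block matrix `[[A, a], [aᵀ, b]]`. -/
def blk (A : Matrix (Fin 2) (Fin 2) ℝ) (a : Fin 2 → ℝ) (b : ℝ) :
    Matrix (Fin 3) (Fin 3) ℝ :=
  Matrix.of fun i j =>
    if hi : (i : ℕ) < 2 then
      if hj : (j : ℕ) < 2 then A ⟨i, hi⟩ ⟨j, hj⟩ else a ⟨i, hi⟩
    else if hj : (j : ℕ) < 2 then a ⟨j, hj⟩ else b

namespace QuadraticMap

theorem polarBilin_injective_of_posDef {R M : Type*} [CommRing R] [PartialOrder R]
    [IsStrictOrderedRing R] [AddCommGroup M] [Module R M] {Q : QuadraticForm R M}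
    (hQ : Q.PosDef) :
    Function.Injective Q.polarBilin := by
  rw [← LinearMap.ker_eq_bot, LinearMap.ker_eq_bot']
  intro x hx
  by_contra hx0
  have h := congrArg (· x) hx
  simp only [polarBilin_apply_apply, polar_self, LinearMap.zero_apply, nsmul_eq_mul] at h
  exact (mul_pos two_pos (hQ x hx0)).ne' (by simpa using h)

theorem exists_forall_le_add_of_posDef_comp {K U V : Type*} [Field K] [LinearOrder K]
    [IsStrictOrderedRing K] [AddCommGroup U] [Module K U] [FiniteDimensional K U]
    [AddCommGroup V] [Module K V] (Q : QuadraticForm K V) {L : U →ₗ[K] V}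
    (hQL : (Q.comp L).PosDef) (v : V) : ∃ u, ∀ u', Q (v + L u) ≤ Q (v + L u') := by
  obtain ⟨u, hu⟩ : ∃ u, (Q.comp L).polarBilin u = -(Q.polarBilin v ∘ₗ L) :=
    ((LinearMap.injective_iff_surjective_of_finrank_eq_finrank
      Subspace.dual_finrank_eq.symm).mp (polarBilin_injective_of_posDef hQL)) _
  refine ⟨u, fun u' => ?_⟩
  have horth : polar Q (v + L u) (L (u' - u)) = 0 := by
    have h := congrArg (· (u' - u)) hu
    simp only [polarBilin_apply_apply, LinearMap.neg_apply, LinearMap.comp_apply, polar,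
      comp_apply, map_add] at h
    rw [polar_add_left, polar, polar]
    linear_combination h
  calc Q (v + L u) ≤ Q (v + L u) + Q (L (u' - u)) + polar Q (v + L u) (L (u' - u)) := by
        rw [horth, add_zero]; exact le_add_of_nonneg_right (hQL.nonneg _)
    _ = Q (v + L u') := by rw [← QuadraticMap.map_add, map_sub]; abel_nf

end QuadraticMap

def enForm (C : Fin 3 → Fin 3 → Fin 3 → Fin 3 → ℝ) : QuadraticForm ℝ (Matrix (Fin 3) (Fin 3) ℝ) :=
  ∑ i, ∑ j, ∑ k, ∑ l, C i j k l •
    QuadraticMap.linMulLin (Matrix.entryLinearMap ℝ ℝ i j) (Matrix.entryLinearMap ℝ ℝ k l)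

theorem enForm_apply (C : Fin 3 → Fin 3 → Fin 3 → Fin 3 → ℝ) (E : Matrix (Fin 3) (Fin 3) ℝ) :
    enForm C E = en C E := by
  simp [enForm, en, QuadraticMap.linMulLin_apply, mul_assoc]

section blk

variable (A : Matrix (Fin 2) (Fin 2) ℝ) (a : Fin 2 → ℝ) (b : ℝ)

@[simp]
theorem blk_castSucc_castSucc (i j : Fin 2) : blk A a b i.castSucc j.castSucc = A i j := by
  simp only [blk, Matrix.of_apply, Fin.val_castSucc, Fin.is_lt, ↓reduceDIte]

@[simp]
theorem blk_castSucc_two (i : Fin 2) : blk A a b i.castSucc 2 = a i := by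
  simp only [blk, Matrix.of_apply, Fin.val_castSucc, Fin.is_lt, ↓reduceDIte]
  simp

@[simp]
theorem blk_two_two : blk A a b 2 2 = b := by
  simp [blk]

theorem blk_eq_zero_iff : blk A a b = 0 ↔ A = 0 ∧ a = 0 ∧ b = 0 := by
  refine ⟨fun h => ⟨?_, ?_, ?_⟩, ?_⟩
  · ext i j; simpa using congrFun (congrFun h i.castSucc) j.castSucc
  · ext i; simpa using congrFun (congrFun h i.castSucc) 2
  · simpa using congrFun (congrFun h 2) 2
  · rintro ⟨rfl, rfl, rfl⟩
    ext i j
    simp only [blk, Matrix.of_apply]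
    split_ifs <;> rfl

theorem blk_eq_add : blk A a b = blk A 0 0 + blk 0 a b := by
  ext i j
  simp only [blk, Matrix.add_apply, Matrix.of_apply]
  split_ifs <;> simp

end blk

theorem Matrix.IsSymm.blk {A : Matrix (Fin 2) (Fin 2) ℝ} (hA : A.IsSymm)
    (a : Fin 2 → ℝ) (b : ℝ) : (blk A a b).IsSymm := by
  ext i j
  simp only [_root_.blk, Matrix.transpose_apply, Matrix.of_apply]
  split_ifs <;> first | rfl | exact hA.apply _ _

@[simps]
def blkOffDiag : ((Fin 2 → ℝ) × ℝ) →ₗ[ℝ] Matrix (Fin 3) (Fin 3) ℝ where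
  toFun x := blk 0 x.1 x.2
  map_add' x y := by
    ext i j
    simp only [blk, Matrix.add_apply, Matrix.of_apply]
    split_ifs <;> simp
  map_smul' c x := by
    ext i j
    simp only [blk, Matrix.smul_apply, Matrix.of_apply]
    split_ifs <;> simp

theorem stmt_3_general (C : Fin 3 → Fin 3 → Fin 3 → Fin 3 → ℝ)
    (hpos : ∀ E : Matrix (Fin 3) (Fin 3) ℝ, E.IsSymm → E ≠ 0 → 0 < en C E)
    (A : Matrix (Fin 2) (Fin 2) ℝ) (hA : A.IsSymm) (hA0 : A ≠ 0) :
    (∃ q : ℝ, IsLeast {q : ℝ | ∃ (a : Fin 2 → ℝ) (b : ℝ), q = en C (blk A a b)} q) ∧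
    (∀ q : ℝ, IsLeast {q : ℝ | ∃ (a : Fin 2 → ℝ) (b : ℝ), q = en C (blk A a b)} q →
      0 < q) := by
  have hposOff : ((enForm C).comp blkOffDiag).PosDef := fun x hx => by
    rw [QuadraticMap.comp_apply, enForm_apply]
    refine hpos _ (Matrix.isSymm_zero.blk _ _) ?_
    simpa [blk_eq_zero_iff, Prod.ext_iff] using hx
  obtain ⟨u, hu⟩ := (enForm C).exists_forall_le_add_of_posDef_comp hposOff (blk A 0 0)
  refine ⟨⟨en C (blk A u.1 u.2), ⟨u.1, u.2, rfl⟩, ?_⟩, ?_⟩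
  · rintro _ ⟨a, b, rfl⟩
    simpa only [blkOffDiag_apply, ← blk_eq_add, enForm_apply] using hu (a, b)
  · rintro _ ⟨⟨a, b, rfl⟩, -⟩
    exact hpos _ (hA.blk a b) (by simp [blk_eq_zero_iff, hA0])

/-- `Q(A) := min_{a,b} ℂ[[A,a],[aᵀ,b]] : [[A,a],[aᵀ,b]]` is well defined (the minimum
is attained) and is a positive definite quadratic form on symmetric 2×2 matrices:
`Q(A) > 0` for symmetric `A ≠ 0`. -/
theorem stmt_3 (C : Fin 3 → Fin 3 → Fin 3 → Fin 3 → ℝ)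
    (hsym : ∀ i j k l, C i j k l = C k l i j)
    (hpos : ∀ E : Matrix (Fin 3) (Fin 3) ℝ, E.IsSymm → E ≠ 0 → 0 < en C E)
    (A : Matrix (Fin 2) (Fin 2) ℝ) (hA : A.IsSymm) (hA0 : A ≠ 0) :
    (∃ q : ℝ, IsLeast {q : ℝ | ∃ (a : Fin 2 → ℝ) (b : ℝ), q = en C (blk A a b)} q) ∧
    (∀ q : ℝ, IsLeast {q : ℝ | ∃ (a : Fin 2 → ℝ) (b : ℝ), q = en C (blk A a b)} q →
      0 < q) :=
  stmt_3_general C hpos A hA hA0
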